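/- arXiv:math/0108060 — 5 statements merged into one kernel-verified Lean document; each statement's English description precedes it below -/
import Mathlib

section
/- A nonzero positive trace-class operator A on a Hilbert space H has rank one if and only if the set {T positive trace-class : T ≤ A} is infinite and totally ordered with respect to the Loewner order ≤. -/
set_option synthInstance.maxHeartbeats 1000000
set_option maxHeartbeats 1000000

open scoped InnerProductSpace

variable {H : Type*} [NormedAddCommGroup H] [InnerProductSpace ℂ H] [CompleteSpace H]

/-- The trace of an operator, computed along a fixed Hilbert basis of `H`. -/
noncomputable def otrace (A : H →L[ℂ] H) : ℝ :=
  ∑' x : (exists_hilbertBasis ℂ H).choose, RCLike.re ⟪A x, (x : H)⟫_ℂ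

/-- Trace class (for positive operators): summability of the diagonal along the basis. -/
def IsTraceClassPos (A : H →L[ℂ] H) : Prop :=
  Summable fun x : (exists_hilbertBasis ℂ H).choose => RCLike.re ⟪A x, (x : H)⟫_ℂ

/-- Uhlmann's fidelity `F(A,B) = tr ((A^{1/2} B A^{1/2})^{1/2})`. -/
noncomputable def fidelity (A B : H →L[ℂ] H) : ℝ :=
  otrace (CFC.sqrt (CFC.sqrt A * B * CFC.sqrt A))

/-- A rank-one (orthogonal) projection: a self-adjoint idempotent of rank one. -/
def IsRankOneProjection (P : H →L[ℂ] H) : Prop :=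
  IsSelfAdjoint P ∧ P * P = P ∧ Module.finrank ℂ (LinearMap.range (P : H →ₗ[ℂ] H)) = 1

section Aux

private lemma sqrtInner {T : H →L[ℂ] H} (hT : T.IsPositive) (x y : H) :
    ⟪T x, y⟫_ℂ = ⟪CFC.sqrt T x, CFC.sqrt T y⟫_ℂ := by
  have h1 : CFC.sqrt T * CFC.sqrt T = T :=
    CFC.sqrt_mul_sqrt_self T ((ContinuousLinearMap.nonneg_iff_isPositive T).mpr hT)
  have h2 : IsSelfAdjoint (CFC.sqrt T) := IsSelfAdjoint.of_nonneg (CFC.sqrt_nonneg _)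
  conv_lhs => rw [← h1]
  exact (ContinuousLinearMap.isSelfAdjoint_iff_isSymmetric.mp h2) _ y

private lemma reInnerSqrt {T : H →L[ℂ] H} (hT : T.IsPositive) (x : H) :
    RCLike.re ⟪T x, x⟫_ℂ = ‖CFC.sqrt T x‖ ^ 2 := by
  rw [sqrtInner hT, inner_self_eq_norm_sq]

private lemma applyZero {T : H →L[ℂ] H} (hT : T.IsPositive) {x : H}
    (hx : RCLike.re ⟪T x, x⟫_ℂ = 0) : T x = 0 := by
  have h1 : CFC.sqrt T * CFC.sqrt T = T :=
    CFC.sqrt_mul_sqrt_self T ((ContinuousLinearMap.nonneg_iff_isPositive T).mpr hT)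
  have h2 : CFC.sqrt T x = 0 := by
    have h3 := reInnerSqrt hT x
    rw [hx] at h3
    have h4 : ‖CFC.sqrt T x‖ = 0 := by nlinarith [norm_nonneg (CFC.sqrt T x)]
    simpa using h4
  have h5 : T x = CFC.sqrt T (CFC.sqrt T x) := by
    conv_lhs => rw [← h1]
    rw [ContinuousLinearMap.mul_apply]
  rw [h5, h2, map_zero]

private lemma opCS {T : H →L[ℂ] H} (hT : T.IsPositive) (x y : H) :
    ‖⟪T x, y⟫_ℂ‖ ^ 2 ≤ RCLike.re ⟪T x, x⟫_ℂ * RCLike.re ⟪T y, y⟫_ℂ := by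
  rw [sqrtInner hT, reInnerSqrt hT, reInnerSqrt hT]
  calc ‖⟪CFC.sqrt T x, CFC.sqrt T y⟫_ℂ‖ ^ 2 ≤ (‖CFC.sqrt T x‖ * ‖CFC.sqrt T y‖) ^ 2 :=
        pow_le_pow_left₀ (norm_nonneg _) (norm_inner_le_norm _ _) 2
  _ = ‖CFC.sqrt T x‖ ^ 2 * ‖CFC.sqrt T y‖ ^ 2 := by ring

private lemma le_re_inner {S T : H →L[ℂ] H} (h : S ≤ T) (x : H) :
    RCLike.re ⟪S x, x⟫_ℂ ≤ RCLike.re ⟪T x, x⟫_ℂ := by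
  have h1 := ((ContinuousLinearMap.le_def S T).mp h).re_inner_nonneg_left x
  rw [ContinuousLinearMap.sub_apply, inner_sub_left, map_sub] at h1
  linarith

/-- Rank-one operator `x ↦ ⟪w, x⟫ • w`. -/
noncomputable def auxRk1 (w : H) : H →L[ℂ] H := (innerSL ℂ w).smulRight w

lemma auxRk1_apply (w x : H) : auxRk1 w x = ⟪w, x⟫_ℂ • w := rfl

private lemma re_smul_inner (r : ℝ) (S : H →L[ℂ] H) (x : H) :
    RCLike.re ⟪(r • S) x, x⟫_ℂ = r * RCLike.re ⟪S x, x⟫_ℂ := by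
  have h0 : (r • S) x = (r : ℂ) • S x := by simp [Complex.coe_smul]
  rw [h0, inner_smul_left]
  simp [Complex.conj_ofReal]

private lemma smulSelfAdjoint {S : H →L[ℂ] H} (hS : IsSelfAdjoint S) (r : ℝ) :
    IsSelfAdjoint (r • S) := by
  rw [ContinuousLinearMap.isSelfAdjoint_iff_isSymmetric] at hS ⊢
  intro x y
  have h0 : ∀ z, (r • S) z = (r : ℂ) • S z := fun z => by simp [Complex.coe_smul]
  show ⟪(r • S) x, y⟫_ℂ = ⟪x, (r • S) y⟫_ℂ
  rw [h0, h0, inner_smul_left, inner_smul_right, Complex.conj_ofReal]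
  exact congrArg (fun z => (r : ℂ) * z) (hS x y)

private lemma rk1_re (w : H) (r : ℝ) (x : H) :
    RCLike.re ⟪(r • auxRk1 w) x, x⟫_ℂ = r * ‖⟪w, x⟫_ℂ‖ ^ 2 := by
  rw [re_smul_inner, auxRk1_apply, inner_smul_left, RCLike.conj_mul]
  congr 1
  norm_cast

private lemma rk1_selfAdjoint (w : H) (r : ℝ) : IsSelfAdjoint (r • auxRk1 w) := by
  have h1 : IsSelfAdjoint (auxRk1 w) := by
    rw [ContinuousLinearMap.isSelfAdjoint_iff_isSymmetric]
    intro x y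
    show ⟪auxRk1 w x, y⟫_ℂ = ⟪x, auxRk1 w y⟫_ℂ
    simp only [auxRk1_apply, inner_smul_left, inner_smul_right]
    rw [inner_conj_symm]
    ring
  exact smulSelfAdjoint h1 r

private lemma smul_isPositive {A : H →L[ℂ] H} (hA : A.IsPositive) {r : ℝ} (hr : 0 ≤ r) :
    (r • A).IsPositive := by
  refine ⟨ContinuousLinearMap.isSelfAdjoint_iff_isSymmetric.mp (smulSelfAdjoint hA.isSelfAdjoint r), fun x => ?_⟩
  rw [ContinuousLinearMap.reApplyInnerSelf_apply, re_smul_inner]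
  exact mul_nonneg hr (hA.re_inner_nonneg_left x)

private lemma traceclass_smul {A : H →L[ℂ] H} (hA' : IsTraceClassPos A) (r : ℝ) :
    IsTraceClassPos (r • A) := by
  exact (hA'.mul_left r).congr fun i => (re_smul_inner r A _).symm

private lemma rk1_isPositive (w : H) {r : ℝ} (hr : 0 ≤ r) : (r • auxRk1 w).IsPositive := by
  refine ⟨ContinuousLinearMap.isSelfAdjoint_iff_isSymmetric.mp (rk1_selfAdjoint w r), fun x => ?_⟩
  rw [ContinuousLinearMap.reApplyInnerSelf_apply, rk1_re]
  positivity

private lemma rk1_traceclass (w : H) (r : ℝ) : IsTraceClassPos (r • auxRk1 w) := by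
  unfold IsTraceClassPos
  obtain ⟨b, hb⟩ := (exists_hilbertBasis ℂ H).choose_spec
  have h1 : Summable fun i : (exists_hilbertBasis ℂ H).choose =>
      ⟪w, (i : H)⟫_ℂ * ⟪(i : H), w⟫_ℂ := by
    refine (b.summable_inner_mul_inner w w).congr fun i => ?_
    have hbi : b i = (i : H) := by simpa using congrFun hb i
    rw [hbi]
  have h2 : Summable fun i : (exists_hilbertBasis ℂ H).choose =>
      RCLike.re (⟪w, (i : H)⟫_ℂ * ⟪(i : H), w⟫_ℂ) :=
    h1.map (RCLike.reCLM : ℂ →L[ℝ] ℝ) RCLike.continuous_re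
  refine ((h2.mul_left r).congr fun i => ?_)
  rw [rk1_re, ← inner_conj_symm (i : H) w, RCLike.mul_conj]
  congr 1
  norm_cast

/-- If `A u ≠ 0`, the normalized rank-one compression of `A` along `u` lies below `A`. -/
private lemma rk1_le {A : H →L[ℂ] H} (hA : A.IsPositive) {u : H} (hu : A u ≠ 0) :
    ((RCLike.re ⟪A u, u⟫_ℂ)⁻¹ • auxRk1 (A u)) ≤ A := by
  set c : ℝ := RCLike.re ⟪A u, u⟫_ℂ with hc
  have hc0 : 0 < c := by
    rcases (hA.re_inner_nonneg_left u).lt_or_eq with h | h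
    · exact h
    · exact absurd (applyZero hA h.symm) hu
  rw [ContinuousLinearMap.le_def]
  refine ⟨hA.1.sub (ContinuousLinearMap.isSelfAdjoint_iff_isSymmetric.mp (rk1_selfAdjoint (A u) c⁻¹)), fun x => ?_⟩
  rw [ContinuousLinearMap.reApplyInnerSelf_apply,
    ContinuousLinearMap.sub_apply, inner_sub_left, map_sub, rk1_re]
  have hCS := opCS hA u x
  have h2 : c⁻¹ * ‖⟪A u, x⟫_ℂ‖ ^ 2 ≤ c⁻¹ * (c * RCLike.re ⟪A x, x⟫_ℂ) := by
    apply mul_le_mul_of_nonneg_left _ (by positivity)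
    exact hCS
  rw [← mul_assoc, inv_mul_cancel₀ hc0.ne', one_mul] at h2
  linarith

private lemma rk1_mem {A : H →L[ℂ] H} (hA : A.IsPositive) {u : H} (hu : A u ≠ 0) :
    ((RCLike.re ⟪A u, u⟫_ℂ)⁻¹ • auxRk1 (A u)) ∈
      {T : H →L[ℂ] H | T.IsPositive ∧ IsTraceClassPos T ∧ T ≤ A} :=
  ⟨rk1_isPositive _ (inv_nonneg.mpr (hA.re_inner_nonneg_left u)), rk1_traceclass _ _, rk1_le hA hu⟩

/-- If the rank-one compression along `u` is below that along `v`, then `A u` is a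
multiple of `A v`. -/
private lemma rk1_comparable {A : H →L[ℂ] H} (hA : A.IsPositive) {u v : H}
    (hu : A u ≠ 0) (hv : A v ≠ 0)
    (hle : ((RCLike.re ⟪A u, u⟫_ℂ)⁻¹ • auxRk1 (A u)) ≤
           ((RCLike.re ⟪A v, v⟫_ℂ)⁻¹ • auxRk1 (A v))) :
    ∃ s : ℂ, A u = s • A v := by
  set cu : ℝ := RCLike.re ⟪A u, u⟫_ℂ with hcu
  set cv : ℝ := RCLike.re ⟪A v, v⟫_ℂ with hcv
  have hcu0 : 0 < cu := by
    rcases (hA.re_inner_nonneg_left u).lt_or_eq with h | h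
    · exact h
    · exact absurd (applyZero hA h.symm) hu
  have hAv : (‖A v‖ : ℂ) ^ 2 ≠ 0 := by
    simpa using hv
  set x : H := A u - (⟪A v, A u⟫_ℂ / (‖A v‖ : ℂ) ^ 2) • A v with hx
  have hvx : ⟪A v, x⟫_ℂ = 0 := by
    rw [hx, inner_sub_right, inner_smul_right, inner_self_eq_norm_sq_to_K]
    field_simp
    simp [hv]
  have h1 := le_re_inner hle x
  rw [rk1_re, rk1_re, hvx] at h1
  have h2 : ⟪A u, x⟫_ℂ = 0 := by
    have : ‖⟪A u, x⟫_ℂ‖ ^ 2 ≤ 0 := by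
      have := mul_le_mul_of_nonneg_left h1 hcu0.le
      rw [← mul_assoc, mul_inv_cancel₀ hcu0.ne', one_mul] at this
      simpa using this
    have : ‖⟪A u, x⟫_ℂ‖ = 0 := by nlinarith [norm_nonneg ⟪A u, x⟫_ℂ]
    simpa using this
  have h3 : ⟪x, x⟫_ℂ = 0 := by
    rw [hx, inner_sub_left, inner_smul_left]
    rw [show (A u - (⟪A v, A u⟫_ℂ / (‖A v‖ : ℂ) ^ 2) • A v : H) = x from rfl]
    rw [h2, hvx]
    ring
  have h4 : x = 0 := inner_self_eq_zero.mp h3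
  refine ⟨⟪A v, A u⟫_ℂ / (‖A v‖ : ℂ) ^ 2, ?_⟩
  have h5 : A u - (⟪A v, A u⟫_ℂ / (‖A v‖ : ℂ) ^ 2) • A v = 0 := by rw [← hx]; exact h4
  exact sub_eq_zero.mp h5


/-- A positive operator vanishing on the orthocomplement of `w` is a real multiple of
the rank-one operator along `w`. -/
private lemma struct {S : H →L[ℂ] H} (hS : S.IsPositive) {w : H} (hw : w ≠ 0)
    (hperp : ∀ x, ⟪w, x⟫_ℂ = 0 → S x = 0) :
    ∃ γ : ℝ, S = γ • auxRk1 w := by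
  have hn : ((‖w‖ : ℂ)) ≠ 0 := by simpa using hw
  have hsym := ContinuousLinearMap.isSelfAdjoint_iff_isSymmetric.mp hS.isSelfAdjoint
  have key : ∀ x, S x = (⟪w, x⟫_ℂ / (‖w‖ : ℂ) ^ 2) • S w := by
    intro x
    have hq : ⟪w, x - (⟪w, x⟫_ℂ / (‖w‖ : ℂ) ^ 2) • w⟫_ℂ = 0 := by
      rw [inner_sub_right, inner_smul_right, inner_self_eq_norm_sq_to_K]
      field_simp
      rw [mul_zero]; exact mul_eq_zero_of_right _ (sub_self (_ : ℂ))
    have h2 := hperp _ hq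
    rw [map_sub, map_smul] at h2
    exact sub_eq_zero.mp h2
  set c : ℂ := ⟪w, S w⟫_ℂ / (‖w‖ : ℂ) ^ 2 with hc
  have hq : ⟪w, S w - c • w⟫_ℂ = 0 := by
    rw [inner_sub_right, inner_smul_right, inner_self_eq_norm_sq_to_K, hc]
    field_simp
    rw [mul_zero]; exact mul_eq_zero_of_right _ (sub_self (_ : ℂ))
  have hSq : S (S w - c • w) = 0 := hperp _ hq
  have h3 : ⟪S w, S w - c • w⟫_ℂ = 0 := by
    calc ⟪S w, S w - c • w⟫_ℂ = ⟪w, S (S w - c • w)⟫_ℂ := hsym w _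
    _ = 0 := by rw [hSq, inner_zero_right]
  have h4 : S w - c • w = 0 := by
    have hrw : S w = (S w - c • w) + c • w := (sub_add_cancel _ _).symm
    have h5 := h3
    nth_rewrite 1 [hrw] at h5
    rw [inner_add_left, inner_smul_left, hq, mul_zero, add_zero] at h5
    exact inner_self_eq_zero.mp h5
  have h6 : S w = c • w := sub_eq_zero.mp h4
  have hcr : c = ((RCLike.re ⟪S w, w⟫_ℂ : ℝ) : ℂ) / (‖w‖ : ℂ) ^ 2 := by
    rw [hc]
    congr 1
    have h7 := ((ContinuousLinearMap.isPositive_iff_complex S).mp hS w).1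
    calc ⟪w, S w⟫_ℂ = ⟪S w, w⟫_ℂ := (hsym w w).symm
    _ = _ := h7.symm
  refine ⟨RCLike.re ⟪S w, w⟫_ℂ / ‖w‖ ^ 4, ?_⟩
  ext x
  have hx2 : ((RCLike.re ⟪S w, w⟫_ℂ / ‖w‖ ^ 4 : ℝ) • auxRk1 w) x
      = ((RCLike.re ⟪S w, w⟫_ℂ / ‖w‖ ^ 4 : ℝ) : ℂ) • (⟪w, x⟫_ℂ • w) := by
    rw [ContinuousLinearMap.smul_apply, auxRk1_apply, Complex.coe_smul]
  rw [hx2]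
  conv_lhs => rw [key x, h6, hcr]
  rw [smul_smul, smul_smul]
  congr 1
  push_cast
  field_simp

end Aux

theorem rankOne_iff_infinite_chain (hdim : 2 ≤ Module.rank ℂ H)
    (A : H →L[ℂ] H) (hA : A.IsPositive) (hA' : IsTraceClassPos A) (hA0 : A ≠ 0) :
    Module.finrank ℂ (LinearMap.range (A : H →ₗ[ℂ] H)) = 1 ↔
      ({T : H →L[ℂ] H | T.IsPositive ∧ IsTraceClassPos T ∧ T ≤ A}.Infinite ∧
       ∀ T₁ ∈ {T : H →L[ℂ] H | T.IsPositive ∧ IsTraceClassPos T ∧ T ≤ A},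
         ∀ T₂ ∈ {T : H →L[ℂ] H | T.IsPositive ∧ IsTraceClassPos T ∧ T ≤ A},
           T₁ ≤ T₂ ∨ T₂ ≤ T₁) := by
  obtain ⟨u, hu⟩ : ∃ u, A u ≠ 0 := by
    by_contra h
    push_neg at h
    exact hA0 (ContinuousLinearMap.ext fun x => by simpa using h x)
  constructor
  · -- forward direction
    intro h1
    set w : H := A u with hw
    have hw0 : w ≠ 0 := hu
    -- the range is spanned by w
    have hfd : FiniteDimensional ℂ (LinearMap.range (A : H →ₗ[ℂ] H)) :=
      FiniteDimensional.of_finrank_pos (by rw [h1]; norm_num)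
    have hle : Submodule.span ℂ {w} ≤ LinearMap.range (A : H →ₗ[ℂ] H) := by
      rw [Submodule.span_singleton_le_iff_mem]
      exact ⟨u, rfl⟩
    have heq : Submodule.span ℂ {w} = LinearMap.range (A : H →ₗ[ℂ] H) :=
      Submodule.eq_of_le_of_finrank_le hle
        (by rw [h1, finrank_span_singleton hw0])
    have hspan : ∀ x, A x ∈ Submodule.span ℂ ({w} : Set H) := by
      intro x
      rw [heq]
      exact ⟨x, rfl⟩
    have hAperp : ∀ x, ⟪w, x⟫_ℂ = 0 → A x = 0 := by
      intro x hx
      obtain ⟨s, hs⟩ := Submodule.mem_span_singleton.mp (hspan x)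
      apply applyZero hA
      rw [← hs, inner_smul_left, hx, mul_zero, map_zero]
    obtain ⟨γA, hγA⟩ := struct hA hw0 hAperp
    have hγA0 : γA ≠ 0 := by
      intro h
      apply hA0
      rw [hγA, h, zero_smul]
    -- every member of the set is a real multiple of A
    have hTstruct : ∀ T ∈ {T : H →L[ℂ] H | T.IsPositive ∧ IsTraceClassPos T ∧ T ≤ A},
        ∃ t : ℝ, T = t • A := by
      rintro T ⟨hT, -, hTle⟩
      have hTperp : ∀ x, ⟪w, x⟫_ℂ = 0 → T x = 0 := by
        intro x hx
        apply applyZero hT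
        have hup := le_re_inner hTle x
        have hdown := hT.re_inner_nonneg_left x
        have hz : RCLike.re ⟪A x, x⟫_ℂ = 0 := by rw [hAperp x hx]; simp
        linarith
      obtain ⟨γT, hγT⟩ := struct hT hw0 hTperp
      refine ⟨γT / γA, ?_⟩
      rw [hγT, hγA, smul_smul, div_mul_cancel₀ _ hγA0]
    constructor
    · -- infiniteness
      apply Set.infinite_of_injective_forall_mem
        (f := fun n : ℕ => (((n : ℝ) + 1))⁻¹ • A)
      · -- injectivity
        intro m n h
        have h3 : (((m : ℝ) + 1))⁻¹ • A u = (((n : ℝ) + 1))⁻¹ • A u :=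
          congrArg (fun S : H →L[ℂ] H => S u) h
        have h4 : (((m : ℝ) + 1))⁻¹ = (((n : ℝ) + 1))⁻¹ := by
          by_contra hne
          have h5 : ((((m : ℝ) + 1)⁻¹ - ((n : ℝ) + 1)⁻¹) • A u) = 0 := by
            rw [sub_smul, h3, sub_self]
          have h6 : ‖(((m : ℝ) + 1)⁻¹ - ((n : ℝ) + 1)⁻¹)‖ * ‖A u‖ = 0 := by
            rw [← norm_smul, h5, norm_zero]
          rcases mul_eq_zero.mp h6 with h7 | h7
          · exact hne (sub_eq_zero.mp (norm_eq_zero.mp h7))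
          · exact hu (norm_eq_zero.mp h7)
        have h8 : ((m : ℝ) + 1) = ((n : ℝ) + 1) := inv_inj.mp h4
        have h9 : (m : ℝ) = (n : ℝ) := by linarith
        exact_mod_cast h9
      · -- membership
        intro n
        have h9 : (0 : ℝ) < (n : ℝ) + 1 := by positivity
        have h8 : ((n : ℝ) + 1)⁻¹ ≤ 1 := by
          nlinarith [mul_inv_cancel₀ (ne_of_gt h9), inv_nonneg.mpr (le_of_lt h9)]
        refine ⟨smul_isPositive hA (by positivity), traceclass_smul hA' _, ?_⟩
        have h10 : A - ((n : ℝ) + 1)⁻¹ • A = (1 - ((n : ℝ) + 1)⁻¹) • A := by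
          rw [sub_smul, one_smul]
        rw [ContinuousLinearMap.le_def, h10]
        exact smul_isPositive hA (by linarith)
    · -- total order
      rintro T₁ hT₁ T₂ hT₂
      obtain ⟨t₁, rfl⟩ := hTstruct T₁ hT₁
      obtain ⟨t₂, rfl⟩ := hTstruct T₂ hT₂
      rcases le_total t₁ t₂ with h | h
      · left
        rw [ContinuousLinearMap.le_def]
        have h11 : t₂ • A - t₁ • A = (t₂ - t₁) • A := (sub_smul t₂ t₁ A).symm
        rw [h11]
        exact smul_isPositive hA (by linarith)
      · right
        rw [ContinuousLinearMap.le_def]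
        have h11 : t₁ • A - t₂ • A = (t₁ - t₂) • A := (sub_smul t₁ t₂ A).symm
        rw [h11]
        exact smul_isPositive hA (by linarith)
  · -- backward direction
    rintro ⟨-, hchain⟩
    by_contra hne
    have hv : ∃ v, A v ∉ Submodule.span ℂ ({A u} : Set H) := by
      by_contra h
      push_neg at h
      apply hne
      have hr : LinearMap.range (A : H →ₗ[ℂ] H) = Submodule.span ℂ ({A u} : Set H) := by
        apply le_antisymm
        · rintro y ⟨x, rfl⟩
          exact h x
        · rw [Submodule.span_singleton_le_iff_mem]
          exact ⟨u, rfl⟩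
      rw [hr, finrank_span_singleton hu]
    obtain ⟨v, hv⟩ := hv
    have hv0 : A v ≠ 0 := fun h => hv (h ▸ Submodule.zero_mem _)
    rcases hchain _ (rk1_mem hA hu) _ (rk1_mem hA hv0) with h | h
    · obtain ⟨s, hs⟩ := rk1_comparable hA hu hv0 h
      have hs0 : s ≠ 0 := by
        rintro rfl
        rw [zero_smul] at hs
        exact hu hs
      apply hv
      rw [Submodule.mem_span_singleton]
      exact ⟨s⁻¹, by rw [hs, smul_smul, inv_mul_cancel₀ hs0, one_smul]⟩
    · obtain ⟨s, hs⟩ := rk1_comparable hA hv0 hu h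
      exact hv (Submodule.mem_span_singleton.mpr ⟨s, hs.symm⟩)
end

section
/- Let H be a Hilbert space of finite dimension d ≥ 2. A positive operator A on H has rank one if and only if A ≠ 0 and there exist nonzero positive operators A_1, ..., A_{d-1} such that the operators A, A_1, ..., A_{d-1} are pairwise mutually orthogonal (i.e., the product of any two distinct ones is 0). -/
set_option synthInstance.maxHeartbeats 1000000
set_option maxHeartbeats 1000000

open scoped InnerProductSpace

variable {H : Type*} [NormedAddCommGroup H] [InnerProductSpace ℂ H] [CompleteSpace H]

open scoped ComplexConjugate in
lemma aux_rankone_pos {H : Type*} [NormedAddCommGroup H] [InnerProductSpace ℂ H]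
    [CompleteSpace H] (v : H) :
    (((innerSL ℂ v).smulRight v) : H →L[ℂ] H).IsPositive := by
  constructor
  · show (_ : H →ₗ[ℂ] H).IsSymmetric
    intro x y
    simp only [ContinuousLinearMap.coe_coe, ContinuousLinearMap.smulRight_apply,
      innerSL_apply_apply, inner_smul_left, inner_smul_right, inner_conj_symm]
    ring
  · intro x
    have : ((innerSL ℂ v).smulRight v).reApplyInnerSelf x
        = RCLike.re (⟪v, x⟫_ℂ * conj ⟪v, x⟫_ℂ) := by
      simp [ContinuousLinearMap.reApplyInnerSelf, inner_smul_left, mul_comm]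
    rw [this, RCLike.mul_conj]
    rw [← RCLike.ofReal_pow, RCLike.ofReal_re]
    positivity

theorem rankOne_iff_orthogonal_system {H : Type*} [NormedAddCommGroup H]
    [InnerProductSpace ℂ H] [FiniteDimensional ℂ H]
    (hd : 2 ≤ Module.finrank ℂ H) (A : H →L[ℂ] H) (hA : A.IsPositive) :
    Module.finrank ℂ (LinearMap.range (A : H →ₗ[ℂ] H)) = 1 ↔
      (A ≠ 0 ∧ ∃ T : Fin (Module.finrank ℂ H - 1) → (H →L[ℂ] H),
        (∀ i, (T i).IsPositive ∧ T i ≠ 0) ∧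
        (∀ i, A * T i = 0) ∧
        (∀ i j, i ≠ j → T i * T j = 0)) := by
  set d := Module.finrank ℂ H with hdd
  have hrn : Module.finrank ℂ (LinearMap.range (A : H →ₗ[ℂ] H)) +
      Module.finrank ℂ (LinearMap.ker (A : H →ₗ[ℂ] H)) = d :=
    LinearMap.finrank_range_add_finrank_ker _
  constructor
  · intro h1
    have hA0 : A ≠ 0 := by
      intro h0
      rw [h0] at h1
      rw [ContinuousLinearMap.coe_zero, LinearMap.range_zero, finrank_bot] at h1
      exact one_ne_zero h1.symm
    refine ⟨hA0, ?_⟩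
    have hker : Module.finrank ℂ (LinearMap.ker (A : H →ₗ[ℂ] H)) = d - 1 := by omega
    set K := LinearMap.ker (A : H →ₗ[ℂ] H)
    let b := stdOrthonormalBasis ℂ K
    let v : Fin (d - 1) → H := fun i => (b (Fin.cast hker.symm i) : H)
    have hvK : ∀ i, A (v i) = 0 := fun i => (b (Fin.cast hker.symm i)).2
    have hvo : ∀ i j, ⟪v i, v j⟫_ℂ = if i = j then 1 else 0 := by
      intro i j
      have := b.orthonormal
      rw [orthonormal_iff_ite] at this
      have h := this (Fin.cast hker.symm i) (Fin.cast hker.symm j)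
      rw [Submodule.coe_inner] at h
      simpa [v, Fin.ext_iff] using h
    refine ⟨fun i => (innerSL ℂ (v i)).smulRight (v i), fun i => ⟨aux_rankone_pos _, ?_⟩,
      fun i => ?_, fun i j hij => ?_⟩
    · intro h0
      beta_reduce at h0
      have hvv : ⟪v i, v i⟫_ℂ = 1 := by simpa using hvo i i
      have happ : ((innerSL ℂ (v i)).smulRight (v i)) (v i) = 0 := by rw [h0]; rfl
      simp only [ContinuousLinearMap.smulRight_apply, innerSL_apply_apply, hvv, one_smul] at happ
      rw [happ] at hvv
      simp at hvv
    · ext x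
      simp [hvK i]
    · ext x
      simp [hvo i j, if_neg hij]
  · rintro ⟨hA0, T, hpos, hAT, hTT⟩
    -- pick nonzero vectors in the ranges
    have hx : ∀ i, ∃ x : H, T i x ≠ 0 := by
      intro i
      by_contra h
      push_neg at h
      exact (hpos i).2 (by ext x; simp [h x])
    choose x hxne using hx
    set v : Fin (d - 1) → H := fun i => T i (x i) with hv
    have hvnorm : ∀ i, ‖v i‖ ≠ 0 := fun i => norm_ne_zero_iff.mpr (hxne i)
    set u : Fin (d - 1) → H := fun i => ((‖v i‖ : ℂ))⁻¹ • v i with hu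
    have huo : Orthonormal ℂ u := by
      constructor
      · intro i
        simp only [hu, norm_smul]
        rw [norm_inv]
        simp [hvnorm i]
      · intro i j hij
        have hsym : (T i : H →ₗ[ℂ] H).IsSymmetric :=
          (hpos i).1.1
        have : ⟪v i, v j⟫_ℂ = 0 := by
          have h0 : (T i) ((T j) (x j)) = 0 := by
            have := congrArg (fun f : H →L[ℂ] H => f (x j)) (hTT i j hij)
            simpa using this
          calc ⟪T i (x i), T j (x j)⟫_ℂ = ⟪x i, T i (T j (x j))⟫_ℂ := hsym _ _
            _ = 0 := by rw [h0]; simp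
        simp only [hu, inner_smul_left, inner_smul_right, this, mul_zero]
    have hli : LinearIndependent ℂ u := huo.linearIndependent
    have hspan : Module.finrank ℂ (Submodule.span ℂ (Set.range u)) = d - 1 := by
      rw [finrank_span_eq_card hli, Fintype.card_fin]
    have huker : ∀ i, u i ∈ LinearMap.ker (A : H →ₗ[ℂ] H) := by
      intro i
      have h0 : A (T i (x i)) = 0 := by
        have := congrArg (fun f : H →L[ℂ] H => f (x i)) (hAT i)
        simpa using this
      simp only [LinearMap.mem_ker, ContinuousLinearMap.coe_coe, hu, map_smul, hv, h0,
        smul_zero]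
    have hle : Submodule.span ℂ (Set.range u) ≤ LinearMap.ker (A : H →ₗ[ℂ] H) := by
      rw [Submodule.span_le]
      rintro _ ⟨i, rfl⟩
      exact huker i
    have hker_ge : d - 1 ≤ Module.finrank ℂ (LinearMap.ker (A : H →ₗ[ℂ] H)) := by
      rw [← hspan]
      exact Submodule.finrank_mono hle
    have hrange_pos : 0 < Module.finrank ℂ (LinearMap.range (A : H →ₗ[ℂ] H)) := by
      by_contra h
      push_neg at h
      have h0 : Module.finrank ℂ (LinearMap.range (A : H →ₗ[ℂ] H)) = 0 := by omega
      rw [Submodule.finrank_eq_zero, LinearMap.range_eq_bot] at h0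
      rw [← ContinuousLinearMap.coe_zero] at h0
      exact hA0 (ContinuousLinearMap.coe_inj.mp h0)
    omega
end

section
/- Let H be a complex Hilbert space and φ a bijective fidelity-preserving map on the positive trace-class operators (F(φ(A),φ(B)) = F(A,B) for all A,B). If additionally φ(P) = P for every rank-one projection P, then φ(A) = A for all positive trace-class A. -/
set_option synthInstance.maxHeartbeats 1000000
set_option maxHeartbeats 1000000

open scoped InnerProductSpace

variable {H : Type*} [NormedAddCommGroup H] [InnerProductSpace ℂ H] [CompleteSpace H]

set_option linter.unusedSectionVars false

/-! ### Auxiliary: rank-one operators -/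


/-- The rank-one operator `y ↦ ⟪x, y⟫ • x`. -/
noncomputable def rk (x : H) : H →L[ℂ] H := (innerSL ℂ x).smulRight x

lemma rk_apply (x y : H) : rk x y = ⟪x, y⟫_ℂ • x := rfl

lemma rk_isPositive (x : H) : (rk x).IsPositive := by
  constructor
  · intro y z
    simp [rk_apply, inner_smul_left, inner_smul_right, mul_comm]
  · intro y
    simp only [ContinuousLinearMap.reApplyInnerSelf, rk_apply, inner_smul_left]
    rw [RCLike.conj_mul]
    norm_cast
    positivity

lemma rk_selfAdjoint (x : H) : IsSelfAdjoint (rk x) := (rk_isPositive x).isSelfAdjoint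

lemma rk_mul_rk (x : H) : rk x * rk x = ⟪x, x⟫_ℂ • rk x := by
  ext y
  simp [rk_apply, ContinuousLinearMap.mul_apply, inner_smul_right, smul_smul, mul_comm]

lemma rk_smul (a : ℂ) (v : H) : rk (a • v) = (starRingEnd ℂ a * a) • rk v := by
  ext y
  simp [rk_apply, inner_smul_left, smul_smul]
  ring_nf

lemma conj_rk (C : H →L[ℂ] H) (hC : IsSelfAdjoint C) (x : H) :
    C * rk x * C = rk (C x) := by
  ext y
  have hsym := (ContinuousLinearMap.isSelfAdjoint_iff_isSymmetric.mp hC) x y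
  simp only [rk_apply, ContinuousLinearMap.mul_apply, map_smul]
  exact congrArg (fun c => c • C x) hsym.symm

lemma rk_zero : rk (0 : H) = 0 := by
  ext y; simp [rk_apply]

noncomputable def hb : HilbertBasis (exists_hilbertBasis ℂ H).choose ℂ H :=
  (exists_hilbertBasis ℂ H).choose_spec.choose

lemma hb_eq (e : (exists_hilbertBasis ℂ H).choose) : hb (H := H) e = (e : H) :=
  congrFun (exists_hilbertBasis ℂ H).choose_spec.choose_spec e

lemma rk_diag (v : H) (e : H) : RCLike.re ⟪rk v e, e⟫_ℂ = ‖⟪v, e⟫_ℂ‖^2 := by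
  simp only [rk_apply, inner_smul_left, RCLike.conj_mul]
  norm_cast

lemma summable_inner_sq (v : H) :
    Summable fun e : (exists_hilbertBasis ℂ H).choose => (‖⟪v, (e:H)⟫_ℂ‖^2 : ℝ) := by
  have h := ((hb (H := H)).orthonormal).inner_products_summable (x := v)
  refine h.congr fun e => ?_
  simp only [hb_eq, ← norm_inner_symm]

lemma rk_traceClass (v : H) : IsTraceClassPos (rk v) :=
  (summable_inner_sq v).congr fun e => (rk_diag v (e:H)).symm

lemma tsum_rk (v : H) :
    ∑' e : (exists_hilbertBasis ℂ H).choose, RCLike.re ⟪rk v e, (e:H)⟫_ℂ = ‖v‖^2 := by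
  have hp : ∑' e, ⟪v, hb (H := H) e⟫_ℂ * ⟪hb (H := H) e, v⟫_ℂ = ⟪v, v⟫_ℂ :=
    (hb (H := H)).tsum_inner_mul_inner v v
  have hterm : ∀ e : (exists_hilbertBasis ℂ H).choose,
      ⟪v, hb (H := H) e⟫_ℂ * ⟪hb (H := H) e, v⟫_ℂ = ((‖⟪v, (e:H)⟫_ℂ‖^2 : ℝ) : ℂ) := by
    intro e
    rw [hb_eq, ← inner_conj_symm (e:H) v, RCLike.mul_conj]
    norm_cast
  rw [tsum_congr hterm, ← Complex.ofReal_tsum,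
    inner_self_eq_norm_sq_to_K (𝕜 := ℂ)] at hp
  have h2 : (∑' e : (exists_hilbertBasis ℂ H).choose, (‖⟪v, (e:H)⟫_ℂ‖^2 : ℝ)) = ‖v‖^2 := by
    have := congrArg Complex.re hp
    simpa [← Complex.ofReal_pow] using this
  simp only [rk_diag]
  exact h2

lemma otrace_rk (v : H) : otrace (rk v) = ‖v‖^2 := tsum_rk v

lemma otrace_smul_rk (c : ℝ) (v : H) : otrace ((c : ℂ) • rk v) = c * ‖v‖^2 := by
  rw [otrace]
  have : ∀ e : (exists_hilbertBasis ℂ H).choose,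
      RCLike.re ⟪((c:ℂ) • rk v) e, (e:H)⟫_ℂ = c * RCLike.re ⟪rk v e, (e:H)⟫_ℂ := by
    intro e
    rw [ContinuousLinearMap.smul_apply, inner_smul_left, Complex.conj_ofReal]
    exact Complex.re_ofReal_mul c _
  rw [tsum_congr this, tsum_mul_left, tsum_rk]

lemma otrace_zero : otrace (0 : H →L[ℂ] H) = 0 := by
  simp [otrace]

/-- `CFC.sqrt` of a rank-one positive operator. -/
lemma sqrt_rk (v : H) (hv : v ≠ 0) :
    CFC.sqrt (rk v) = ((‖v‖⁻¹ : ℝ) : ℂ) • rk v := by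
  set w : H := ((Real.sqrt ‖v‖)⁻¹ : ℂ) • v with hw_def
  have hnorm : (0:ℝ) ≤ ‖v‖ := norm_nonneg v
  have hvpos : (0:ℝ) < ‖v‖ := norm_pos_iff.mpr hv
  have hw : rk w = ((‖v‖⁻¹ : ℝ) : ℂ) • rk v := by
    rw [hw_def, rk_smul]
    congr 1
    rw [← Complex.ofReal_inv, Complex.conj_ofReal, ← Complex.ofReal_mul, ← Real.sqrt_inv,
      Real.mul_self_sqrt (by positivity)]
  have h2 : rk w ^ 2 = rk v := by
    rw [pow_two, hw, smul_mul_assoc, mul_smul_comm, rk_mul_rk, smul_smul, smul_smul,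
      inner_self_eq_norm_sq_to_K (𝕜 := ℂ)]
    push_cast
    have hne : ((‖v‖:ℝ):ℂ) ≠ 0 := by exact_mod_cast norm_ne_zero_iff.mpr hv
    have hc : (((‖v‖:ℝ):ℂ))⁻¹ * (((‖v‖:ℝ):ℂ))⁻¹ * (((‖v‖:ℝ):ℂ)) ^ 2 = 1 := by
      field_simp
      try ring
    exact (congrArg (fun z : ℂ => z • rk v) hc).trans (one_smul ℂ (rk v))
  have h0 : (0:H→L[ℂ] H) ≤ rk w := (ContinuousLinearMap.nonneg_iff_isPositive _).mpr
    (rk_isPositive w)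
  conv_lhs => rw [← h2]
  rw [CFC.sqrt_sq (rk w) h0, hw]

/-- Fidelity against a rank-one positive operator. -/
lemma fidelity_rk (B : H →L[ℂ] H) (hB : B.IsPositive) (x : H) :
    fidelity B (rk x) = Real.sqrt (RCLike.re ⟪B x, x⟫_ℂ) := by
  have hB0 : (0:H→L[ℂ] H) ≤ B := (ContinuousLinearMap.nonneg_iff_isPositive B).mpr hB
  set C : H →L[ℂ] H := CFC.sqrt B with hC_def
  have hC0 : (0:H→L[ℂ] H) ≤ C := CFC.sqrt_nonneg B
  have hCsa : IsSelfAdjoint C :=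
    ((ContinuousLinearMap.nonneg_iff_isPositive C).mp hC0).isSelfAdjoint
  have hCC : C * C = B := by
    have := CFC.sq_sqrt B hB0
    rwa [pow_two] at this
  have hconj : C * rk x * C = rk (C x) := conj_rk C hCsa x
  have hBx : RCLike.re ⟪B x, x⟫_ℂ = ‖C x‖^2 := by
    rw [← hCC]
    have hsym := (ContinuousLinearMap.isSelfAdjoint_iff_isSymmetric.mp hCsa) (C x) x
    have h3 : ⟪(C * C) x, x⟫_ℂ = ⟪C x, C x⟫_ℂ := hsym
    rw [h3, inner_self_eq_norm_sq_to_K (𝕜 := ℂ)]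
    norm_cast
  rw [fidelity, ← hC_def, hconj, hBx, Real.sqrt_sq (norm_nonneg _)]
  by_cases hx : C x = 0
  · rw [hx, rk_zero, CFC.sqrt_zero, otrace_zero, norm_zero]
  · rw [sqrt_rk (C x) hx, otrace_smul_rk]
    have : ‖C x‖ ≠ 0 := norm_ne_zero_iff.mpr hx
    field_simp [pow_two]

/-- For a unit vector, `rk x` is a rank-one projection. -/
lemma rk_isRankOneProjection (x : H) (hx : ‖x‖ = 1) : IsRankOneProjection (rk x) := by
  have hxx : ⟪x, x⟫_ℂ = 1 := by
    rw [inner_self_eq_norm_sq_to_K (𝕜 := ℂ), hx]; norm_num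
  have hx0 : x ≠ 0 := by
    intro h; rw [h, norm_zero] at hx; norm_num at hx
  refine ⟨rk_selfAdjoint x, by rw [rk_mul_rk, hxx, one_smul], ?_⟩
  have hrange : LinearMap.range ((rk x : H →L[ℂ] H) : H →ₗ[ℂ] H) = ℂ ∙ x := by
    apply le_antisymm
    · rintro _ ⟨y, rfl⟩
      exact Submodule.smul_mem _ _ (Submodule.mem_span_singleton_self x)
    · rw [Submodule.span_le, Set.singleton_subset_iff]
      exact ⟨x, by simp [rk_apply, hxx, hx]⟩
  rw [hrange, finrank_span_singleton hx0]

theorem fidelity_preserver_fixing_projections_is_id (φ : (H →L[ℂ] H) → (H →L[ℂ] H))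
    (hbij : Set.BijOn φ {A : H →L[ℂ] H | A.IsPositive ∧ IsTraceClassPos A} {A : H →L[ℂ] H | A.IsPositive ∧ IsTraceClassPos A})
    (hF : ∀ A ∈ {A : H →L[ℂ] H | A.IsPositive ∧ IsTraceClassPos A}, ∀ B ∈ {A : H →L[ℂ] H | A.IsPositive ∧ IsTraceClassPos A}, fidelity (φ A) (φ B) = fidelity A B)
    (hfix : ∀ P : H →L[ℂ] H, IsRankOneProjection P → φ P = P) :
    ∀ A ∈ {A : H →L[ℂ] H | A.IsPositive ∧ IsTraceClassPos A}, φ A = A := by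
  intro A hA
  have hφA := hbij.mapsTo hA
  -- key: equality of quadratic forms on unit vectors
  have key : ∀ x : H, ‖x‖ = 1 → RCLike.re ⟪(φ A) x, x⟫_ℂ = RCLike.re ⟪A x, x⟫_ℂ := by
    intro x hx
    have hP := rk_isRankOneProjection x hx
    have hPmem : rk x ∈ {A : H →L[ℂ] H | A.IsPositive ∧ IsTraceClassPos A} :=
      ⟨rk_isPositive x, rk_traceClass x⟩
    have h := hF A hA (rk x) hPmem
    rw [hfix (rk x) hP, fidelity_rk (φ A) hφA.1 x, fidelity_rk A hA.1 x] at h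
    have h1 : 0 ≤ RCLike.re ⟪(φ A) x, x⟫_ℂ := hφA.1.re_inner_nonneg_left x
    have h2 : 0 ≤ RCLike.re ⟪A x, x⟫_ℂ := hA.1.re_inner_nonneg_left x
    exact (Real.sqrt_inj h1 h2).mp h
  -- deduce equality of inner products everywhere
  set T : H →L[ℂ] H := φ A - A with hT_def
  have hTsa : IsSelfAdjoint T := hφA.1.isSelfAdjoint.sub hA.1.isSelfAdjoint
  have hTsym := ContinuousLinearMap.isSelfAdjoint_iff_isSymmetric.mp hTsa
  have hTreal : ∀ u : H, ⟪T u, u⟫_ℂ = (RCLike.re ⟪T u, u⟫_ℂ : ℂ) := by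
    intro u
    have := hTsym.coe_reApplyInnerSelf_apply u
    exact this.symm
  have hzero : ∀ u : H, ⟪T u, u⟫_ℂ = 0 := by
    intro u
    by_cases hu : u = 0
    · simp [hu]
    · set x : H := ((‖u‖⁻¹ : ℝ) : ℂ) • u with hx_def
      have hux : u = ((‖u‖ : ℝ) : ℂ) • x := by
        rw [hx_def, smul_smul, ← Complex.ofReal_mul,
          mul_inv_cancel₀ (norm_ne_zero_iff.mpr hu), Complex.ofReal_one, one_smul]
      have hxnorm : ‖x‖ = 1 := by
        rw [hx_def, norm_smul]
        simp [norm_ne_zero_iff.mpr hu]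
      have hre : RCLike.re ⟪T x, x⟫_ℂ = 0 := by
        have := key x hxnorm
        have hsub : ⟪T x, x⟫_ℂ = ⟪(φ A) x, x⟫_ℂ - ⟪A x, x⟫_ℂ := by
          simp [hT_def, inner_sub_left]
        rw [hsub, map_sub, this, sub_self]
      have hTx : ⟪T x, x⟫_ℂ = 0 := by rw [hTreal x, hre]; norm_num
      rw [hux]
      rw [map_smul, inner_smul_left, inner_smul_right, hTx]
      ring
  have : (T : H →ₗ[ℂ] H) = 0 := (inner_map_self_eq_zero (T : H →ₗ[ℂ] H)).mp (fun u => hzero u)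
  have hT0 : T = 0 := by
    ext u
    have := congrArg (fun f => f u) this
    simpa using this
  have := sub_eq_zero.mp hT0
  exact this
end

section
/- Uniqueness of implementing operator: if U and V are unitary or antiunitary operators on a Hilbert space H with U A U* = V A V* for all positive trace-class operators A (equivalently for all rank-one projections), then V = λU for some scalar λ with |λ| = 1; in particular U and V are of the same kind (both unitary or both antiunitary). -/
set_option synthInstance.maxHeartbeats 1000000
set_option maxHeartbeats 1000000

open scoped InnerProductSpace

variable {H : Type*} [NormedAddCommGroup H] [InnerProductSpace ℂ H] [CompleteSpace H]

lemma rankOne_pos (u : H) : ((innerSL ℂ u).smulRight u).IsPositive := by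
  constructor
  · intro x y
    simp [inner_smul_left, inner_smul_right]
    ring
  · intro x
    simp only [ContinuousLinearMap.reApplyInnerSelf, ContinuousLinearMap.smulRight_apply,
      innerSL_apply_apply, inner_smul_left, RCLike.conj_mul, ← RCLike.ofReal_pow, RCLike.ofReal_re]
    exact sq_nonneg _

lemma rankOne_tc (u : H) : IsTraceClassPos ((innerSL ℂ u).smulRight u) := by
  unfold IsTraceClassPos
  obtain ⟨b, hb⟩ := (exists_hilbertBasis ℂ H).choose_spec
  have hs := (b.summable_inner_mul_inner u u).map (AddMonoidHom.mk' RCLike.re (by simp))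
    RCLike.continuous_re
  rw [hb] at hs
  refine hs.congr fun i => ?_
  simp [inner_smul_left]

/-- Uniqueness of the implementing (anti)unitary, up to a phase factor. -/
theorem implementing_operator_unique_up_to_phase
    (hdim : 2 ≤ Module.rank ℂ H) (U V : H ≃ᵢ H)
    (hUadd : ∀ x y : H, U (x + y) = U x + U y)
    (hVadd : ∀ x y : H, V (x + y) = V x + V y)
    (hU : (∀ (c : ℂ) (x : H), U (c • x) = c • U x) ∨
          (∀ (c : ℂ) (x : H), U (c • x) = (starRingEnd ℂ c) • U x))
    (hV : (∀ (c : ℂ) (x : H), V (c • x) = c • V x) ∨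
          (∀ (c : ℂ) (x : H), V (c • x) = (starRingEnd ℂ c) • V x))
    (h : ∀ A : H →L[ℂ] H, A.IsPositive → IsTraceClassPos A →
          ∀ x : H, U (A (U.symm x)) = V (A (V.symm x))) :
    ∃ lam : ℂ, ‖lam‖ = 1 ∧ (∀ x : H, V x = lam • U x) ∧
      ((∀ (c : ℂ) (x : H), U (c • x) = c • U x) ↔
       (∀ (c : ℂ) (x : H), V (c • x) = c • V x)) := by
  -- semilinearity data
  obtain ⟨sU, hsU, hsUr, hsUi⟩ :
      ∃ s : ℂ → ℂ, (∀ c x, U (c • x) = s c • U x) ∧ (∀ r : ℝ, s r = r) ∧ (∀ c, s (s c) = c) := by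
    rcases hU with h' | h'
    · exact ⟨id, h', fun r => rfl, fun c => rfl⟩
    · exact ⟨starRingEnd ℂ, h', fun r => Complex.conj_ofReal r, fun c => Complex.conj_conj c⟩
  obtain ⟨sV, hsV, hsVr, hsVi⟩ :
      ∃ s : ℂ → ℂ, (∀ c x, V (c • x) = s c • V x) ∧ (∀ r : ℝ, s r = r) ∧ (∀ c, s (s c) = c) := by
    rcases hV with h' | h'
    · exact ⟨id, h', fun r => rfl, fun c => rfl⟩
    · exact ⟨starRingEnd ℂ, h', fun r => Complex.conj_ofReal r, fun c => Complex.conj_conj c⟩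
  have hsU0 : sU 0 = 0 := by simpa using hsUr 0
  -- U and V map 0 to 0, preserve norms
  have hU0 : U 0 = 0 := by
    have := hUadd 0 0; rw [add_zero] at this; exact (left_eq_add.mp this)
  have hV0 : V 0 = 0 := by
    have := hVadd 0 0; rw [add_zero] at this; exact (left_eq_add.mp this)
  have hUnorm : ∀ x : H, ‖U x‖ = ‖x‖ := by
    intro x
    calc ‖U x‖ = dist (U x) (U 0) := by rw [hU0, dist_zero_right]
    _ = dist x 0 := U.dist_eq x 0
    _ = ‖x‖ := dist_zero_right x
  have hVnorm : ∀ x : H, ‖V x‖ = ‖x‖ := by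
    intro x
    calc ‖V x‖ = dist (V x) (V 0) := by rw [hV0, dist_zero_right]
    _ = dist x 0 := V.dist_eq x 0
    _ = ‖x‖ := dist_zero_right x
  have hUne : ∀ x : H, x ≠ 0 → U x ≠ 0 := by
    intro x hx hc
    exact hx (norm_eq_zero.mp (by rw [← hUnorm x, hc, norm_zero]))
  -- Key step: V u is a multiple of U u for every nonzero u
  have key : ∀ u : H, u ≠ 0 → ∃ lam : ℂ, V u = lam • U u := by
    intro u hu
    have heq := h _ (rankOne_pos u) (rankOne_tc u) (U u)
    rw [U.symm_apply_apply] at heq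
    simp only [ContinuousLinearMap.smulRight_apply, innerSL_apply_apply] at heq
    have hinner : ⟪u, u⟫_ℂ = ((‖u‖ ^ 2 : ℝ) : ℂ) := by
      rw [inner_self_eq_norm_sq_to_K]; push_cast; rfl
    rw [hinner, hsU _ u, hsV _ u, hsUr] at heq
    set c := sV ⟪u, V.symm (U u)⟫_ℂ with hc
    have hn0 : ((‖u‖ ^ 2 : ℝ) : ℂ) ≠ 0 := by
      simp [hu, norm_eq_zero, pow_eq_zero_iff]
    have hc0 : c ≠ 0 := by
      intro hc0
      rw [hc0, zero_smul] at heq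
      exact hUne u hu ((smul_eq_zero.mp heq).resolve_left hn0)
    refine ⟨c⁻¹ * ((‖u‖ ^ 2 : ℝ) : ℂ), ?_⟩
    have h2 := congrArg (fun z => c⁻¹ • z) heq
    simp only [smul_smul, inv_mul_cancel₀ hc0, one_smul] at h2
    exact h2.symm
  -- uniqueness of the multiple
  have uniq : ∀ (u : H), u ≠ 0 → ∀ a b : ℂ, V u = a • U u → V u = b • U u → a = b := by
    intro u hu a b ha hb
    have h1 : a • U u = b • U u := ha ▸ hb ▸ rfl
    have h2 : (a - b) • U u = 0 := by rw [sub_smul, h1, sub_self]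
    rcases smul_eq_zero.mp h2 with h3 | h3
    · exact sub_eq_zero.mp h3
    · exact absurd h3 (hUne u hu)
  -- independence transfers through U
  have indepU : ∀ x y : H, (∀ a b : ℂ, a • x + b • y = 0 → a = 0 ∧ b = 0) →
      ∀ a b : ℂ, a • U x + b • U y = 0 → a = 0 ∧ b = 0 := by
    intro x y hxy a b hab
    have h1 : U (sU a • x + sU b • y) = 0 := by
      rw [hUadd, hsU, hsU, hsUi, hsUi, hab]
    have h2 : sU a • x + sU b • y = 0 := by
      apply U.injective; rw [h1, hU0]
    obtain ⟨ha, hb⟩ := hxy _ _ h2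
    constructor
    · have := congrArg sU ha; rwa [hsUi, hsU0] at this
    · have := congrArg sU hb; rwa [hsUi, hsU0] at this
  -- existence of an independent companion
  have exists_indep : ∀ x : H, x ≠ 0 →
      ∃ y : H, (∀ a b : ℂ, a • x + b • y = 0 → a = 0 ∧ b = 0) := by
    intro x hx
    have hne : (Submodule.span ℂ ({x} : Set H)) ≠ ⊤ := by
      intro hc
      have h1 := rank_span_le (R := ℂ) ({x} : Set H)
      rw [hc] at h1
      rw [rank_top, Cardinal.mk_singleton] at h1
      have h2 : (2 : Cardinal) ≤ 1 := le_trans hdim h1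
      norm_num at h2
    have hex : ∃ y, y ∉ Submodule.span ℂ ({x} : Set H) := by
      by_contra hcon
      push_neg at hcon
      exact hne (Submodule.eq_top_iff'.mpr hcon)
    obtain ⟨y, hy⟩ := hex
    refine ⟨y, fun a b hab => ?_⟩
    by_cases hb : b = 0
    · subst hb
      rw [zero_smul, add_zero] at hab
      rcases smul_eq_zero.mp hab with h1 | h1
      · exact ⟨h1, rfl⟩
      · exact absurd h1 hx
    · exfalso
      apply hy
      have h1 : y = (-(b⁻¹ * a)) • x := by
        have h2 : b • y = -(a • x) := by
          rw [eq_neg_iff_add_eq_zero, add_comm]; exact hab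
        have := congrArg (fun z => b⁻¹ • z) h2
        simp only [smul_smul, inv_mul_cancel₀ hb, one_smul] at this
        rw [this]
        rw [smul_neg, smul_smul, neg_smul]
      rw [h1]
      exact Submodule.smul_mem _ _ (Submodule.mem_span_singleton_self x)
  -- equality of phases on independent pairs
  have step : ∀ x y : H, x ≠ 0 → y ≠ 0 →
      (∀ a b : ℂ, a • x + b • y = 0 → a = 0 ∧ b = 0) →
      ∀ a b : ℂ, V x = a • U x → V y = b • U y → a = b := by
    intro x y hx hy hind a b hax hby
    have hxy0 : x + y ≠ 0 := by
      intro hc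
      have := (hind 1 1 (by simpa using hc)).1
      exact one_ne_zero this
    obtain ⟨m, hm⟩ := key (x + y) hxy0
    have h1 : (m - a) • U x + (m - b) • U y = 0 := by
      have h2 : a • U x + b • U y = m • U x + m • U y := by
        rw [← hax, ← hby, ← hVadd, hm, hUadd, smul_add]
      rw [sub_smul, sub_smul, sub_add_sub_comm, ← h2, sub_self]
    obtain ⟨h3, h4⟩ := indepU x y hind _ _ h1
    rw [← sub_eq_zero.mp h3, ← sub_eq_zero.mp h4]
  -- nontriviality
  have hnt : Nontrivial H := by
    rw [← rank_pos_iff_nontrivial (R := ℂ)]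
    exact lt_of_lt_of_le (by norm_num) hdim
  obtain ⟨e, he⟩ := exists_ne (0 : H)
  obtain ⟨lam, hlam⟩ := key e he
  -- the phase is globally constant
  have main : ∀ x : H, x ≠ 0 → V x = lam • U x := by
    intro x hx
    obtain ⟨a, hax⟩ := key x hx
    by_cases hind : ∀ a b : ℂ, a • x + b • e = 0 → a = 0 ∧ b = 0
    · rw [hax, step x e hx he hind a lam hax hlam]
    · -- x is a multiple of e; pick a companion independent of e
      obtain ⟨y, hy⟩ := exists_indep e he
      have hy0 : y ≠ 0 := by
        intro hc
        have := (hy 0 1 (by simp [hc])).2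
        exact one_ne_zero this
      -- x = c • e with c ≠ 0
      push_neg at hind
      obtain ⟨p, q, hpq, hne0⟩ := hind
      have hp : p ≠ 0 := by
        intro hp0
        apply hne0 hp0
        rw [hp0, zero_smul, zero_add] at hpq
        rcases smul_eq_zero.mp hpq with h1 | h1
        · exact h1
        · exact absurd h1 he
      have hxce : x = (-(p⁻¹ * q)) • e := by
        have h2 : p • x = -(q • e) := by
          rw [eq_neg_iff_add_eq_zero]; exact hpq
        have := congrArg (fun z => p⁻¹ • z) h2
        simp only [smul_smul, inv_mul_cancel₀ hp, one_smul] at this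
        rw [this, smul_neg, smul_smul, neg_smul]
      set c := -(p⁻¹ * q) with hcdef
      have hc0 : c ≠ 0 := by
        intro hc
        rw [hxce, hc, zero_smul] at hx
        exact hx rfl
      -- x and y are independent
      have hindxy : ∀ a b : ℂ, a • x + b • y = 0 → a = 0 ∧ b = 0 := by
        intro a b hab
        rw [hxce, smul_smul] at hab
        obtain ⟨h1, h2⟩ := hy _ _ hab
        exact ⟨by
          rcases mul_eq_zero.mp h1 with h3 | h3
          · exact h3
          · exact absurd h3 hc0, h2⟩
      obtain ⟨by_, hby⟩ := key y hy0
      have h5 : a = by_ := step x y hx hy0 hindxy a by_ hax hby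
      have h6 : lam = by_ := step e y he hy0 hy lam by_ hlam hby
      rw [hax, h5, ← h6]
  have hall : ∀ x : H, V x = lam • U x := by
    intro x
    by_cases hx : x = 0
    · rw [hx, hU0, hV0, smul_zero]
    · exact main x hx
  have hnormlam : ‖lam‖ = 1 := by
    have h1 : ‖V e‖ = ‖lam‖ * ‖U e‖ := by rw [hall e, norm_smul]
    rw [hVnorm, hUnorm] at h1
    have h2 : ‖e‖ ≠ 0 := norm_ne_zero_iff.mpr he
    refine mul_right_cancel₀ h2 ?_
    rw [one_mul]
    exact h1.symm
  have hlam0 : lam ≠ 0 := by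
    intro hc
    rw [hc, norm_zero] at hnormlam
    norm_num at hnormlam
  refine ⟨lam, hnormlam, hall, ?_, ?_⟩
  · intro hUl c x
    rw [hall, hall, hUl, smul_comm]
  · intro hVl c x
    apply smul_right_injective H hlam0
    show lam • U (c • x) = lam • (c • U x)
    rw [← hall, hVl c x, hall, smul_comm]
end

section
/- Weyl's monotonicity: if A ≤ B are positive compact (e.g., trace-class or finite-dimensional) self-adjoint operators, then for each k the k-th largest eigenvalue of A (counted with multiplicity) is at most the k-th largest eigenvalue of B. Consequently, for fixed m, the sum of the m largest eigenvalues of (A^{1/2} C A^{1/2})^{1/2} is at most that of (B^{1/2} C B^{1/2})^{1/2} for any positive trace-class C. -/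
open scoped ComplexOrder

open Classical in
/-- The `k`-th largest eigenvalue (counted with multiplicity) of a Hermitian matrix
(junk value `0` on non-Hermitian matrices). -/
noncomputable def kthLargestEig {n : ℕ} (A : Matrix (Fin n) (Fin n) ℂ) (k : Fin n) : ℝ :=
  if h : A.IsHermitian then (h.eigenvalues ∘ Tuple.sort h.eigenvalues) k.rev else 0

open Classical in
/-- The positive square root of a positive semidefinite matrix
(junk value `0` otherwise). -/
noncomputable def msqrt {n : ℕ} (A : Matrix (Fin n) (Fin n) ℂ) : Matrix (Fin n) (Fin n) ℂ :=
  if h : A.PosSemidef then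
    (h.1.eigenvectorUnitary : Matrix (Fin n) (Fin n) ℂ) *
      Matrix.diagonal ((↑) ∘ (√·) ∘ h.1.eigenvalues) *
      (star h.1.eigenvectorUnitary : Matrix (Fin n) (Fin n) ℂ)
  else 0

/-- The square root of a positive semidefinite matrix (as in the old Mathlib). -/
noncomputable def Matrix.PosSemidef.sqrt {n : ℕ} {A : Matrix (Fin n) (Fin n) ℂ}
    (h : A.PosSemidef) : Matrix (Fin n) (Fin n) ℂ :=
  (h.1.eigenvectorUnitary : Matrix (Fin n) (Fin n) ℂ) *
    Matrix.diagonal ((↑) ∘ (√·) ∘ h.1.eigenvalues) *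
    (star h.1.eigenvectorUnitary : Matrix (Fin n) (Fin n) ℂ)

lemma Matrix.PosSemidef.posSemidef_sqrt {n : ℕ} {A : Matrix (Fin n) (Fin n) ℂ}
    (h : A.PosSemidef) : h.sqrt.PosSemidef := by
  have hD : (Matrix.diagonal ((↑) ∘ (√·) ∘ h.1.eigenvalues) :
      Matrix (Fin n) (Fin n) ℂ).PosSemidef :=
    Matrix.posSemidef_diagonal_iff.mpr fun i =>
      Complex.zero_le_real.mpr (Real.sqrt_nonneg _)
  have := hD.mul_mul_conjTranspose_same (h.1.eigenvectorUnitary : Matrix (Fin n) (Fin n) ℂ)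
  unfold Matrix.PosSemidef.sqrt
  rwa [Matrix.star_eq_conjTranspose]

lemma Matrix.PosSemidef.sqrt_mul_self {n : ℕ} {A : Matrix (Fin n) (Fin n) ℂ}
    (h : A.PosSemidef) : h.sqrt * h.sqrt = A := by
  conv_rhs => rw [h.1.spectral_theorem, Unitary.conjStarAlgAut_apply]
  unfold Matrix.PosSemidef.sqrt
  set U : Matrix (Fin n) (Fin n) ℂ := (h.1.eigenvectorUnitary : Matrix (Fin n) (Fin n) ℂ)
  have hU : (star h.1.eigenvectorUnitary : Matrix (Fin n) (Fin n) ℂ) * U = 1 :=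
    Unitary.coe_star_mul_self _
  have hD : (Matrix.diagonal ((↑) ∘ (√·) ∘ h.1.eigenvalues) : Matrix (Fin n) (Fin n) ℂ) *
      Matrix.diagonal ((↑) ∘ (√·) ∘ h.1.eigenvalues) =
      Matrix.diagonal (RCLike.ofReal ∘ h.1.eigenvalues) := by
    rw [Matrix.diagonal_mul_diagonal]
    congr 1
    funext i
    simp only [Function.comp_apply]
    rw [← Complex.ofReal_mul, Real.mul_self_sqrt (h.eigenvalues_nonneg i)]
    rfl
  calc _ = U * (Matrix.diagonal ((↑) ∘ (√·) ∘ h.1.eigenvalues) *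
        ((star h.1.eigenvectorUnitary : Matrix (Fin n) (Fin n) ℂ) * U) *
        Matrix.diagonal ((↑) ∘ (√·) ∘ h.1.eigenvalues)) *
        (star h.1.eigenvectorUnitary : Matrix (Fin n) (Fin n) ℂ) := by
        simp only [Matrix.mul_assoc]
        rfl
    _ = _ := by rw [hU, Matrix.mul_one, hD]

section WeylHelpers

open Matrix Polynomial Finset

variable {n : ℕ}

lemma ofFn_comp_ms (u : Fin n → ℝ) (σ : Equiv.Perm (Fin n)) :
    (↑(List.ofFn (u ∘ σ)) : Multiset ℝ) = Multiset.map u Finset.univ.val := by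
  have h1 : (Finset.univ : Finset (Fin n)).val = ↑(List.finRange n) := rfl
  rw [List.ofFn_eq_map, ← Multiset.map_coe, ← h1]
  have h2 : Multiset.map (⇑σ) Finset.univ.val = Finset.univ.val := by
    have := Finset.map_univ_equiv σ
    calc Multiset.map (⇑σ) Finset.univ.val
        = (Finset.map σ.toEmbedding Finset.univ).val := rfl
      _ = Finset.univ.val := by rw [this]
  calc Multiset.map (u ∘ σ) Finset.univ.val
      = Multiset.map u (Multiset.map (⇑σ) Finset.univ.val) := by
        rw [Multiset.map_map]
    _ = Multiset.map u Finset.univ.val := by rw [h2]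

lemma sorted_eq_of_multiset {f g : Fin n → ℝ}
    (h : Multiset.map f Finset.univ.val = Multiset.map g Finset.univ.val) :
    f ∘ Tuple.sort f = g ∘ Tuple.sort g := by
  apply List.ofFn_injective
  haveI : IsAntisymm ℝ (fun x1 x2 => x1 ≤ x2) := ⟨fun _ _ => le_antisymm⟩
  refine (fun hp h1 h2 => List.Perm.eq_of_pairwise' (r := (· ≤ ·)) h1 h2 hp) ?_ ?_ ?_
  · exact Multiset.coe_eq_coe.mp (by rw [ofFn_comp_ms, ofFn_comp_ms, h])
  · exact List.pairwise_ofFn.mpr fun i j hij => Tuple.monotone_sort f hij.le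
  · exact List.pairwise_ofFn.mpr fun i j hij => Tuple.monotone_sort g hij.le

lemma multiset_eq_of_prod {f g : Fin n → ℝ}
    (h : ∀ z : ℂ, z ≠ 0 → ∏ i, (z - (f i : ℂ)) = ∏ i, (z - (g i : ℂ))) :
    Multiset.map f Finset.univ.val = Multiset.map g Finset.univ.val := by
  have hpoly : ∏ i, (X - C (f i : ℂ)) = ∏ i, (X - C (g i : ℂ)) := by
    apply Polynomial.eq_of_infinite_eval_eq
    apply Set.Infinite.mono (s := {z : ℂ | z ≠ 0})
    · intro z hz
      simpa [eval_prod] using h z hz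
    · exact Set.Finite.infinite_compl (Set.finite_singleton 0)
  have key : ∀ u : Fin n → ℝ, (∏ i, (X - C (u i : ℂ))) =
      (Multiset.map (fun r : ℂ => X - C r) (Multiset.map (fun i => (u i : ℂ)) Finset.univ.val)).prod := by
    intro u
    rw [Multiset.map_map, Finset.prod_eq_multiset_prod]
    rfl
  have := congrArg Polynomial.roots hpoly
  rw [key f, key g, Polynomial.roots_multiset_prod_X_sub_C,
    Polynomial.roots_multiset_prod_X_sub_C] at this
  have hinj : Function.Injective (fun r : ℝ => (r : ℂ)) := Complex.ofReal_injective
  apply Multiset.map_injective hinj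
  simpa [Multiset.map_map, Function.comp_def] using this
variable {n : ℕ}

lemma det_smul_one_sub_conj (V : Matrix.unitaryGroup (Fin n) ℂ) (μ : Fin n → ℝ) (z : ℂ) :
    det (z • (1 : Matrix (Fin n) (Fin n) ℂ) -
      (V : Matrix (Fin n) (Fin n) ℂ) * diagonal (RCLike.ofReal ∘ μ) * star (V : Matrix (Fin n) (Fin n) ℂ)) =
    ∏ i, (z - (μ i : ℂ)) := by
  have hVV : (V : Matrix (Fin n) (Fin n) ℂ) * star (V : Matrix (Fin n) (Fin n) ℂ) = 1 :=
    Matrix.mem_unitaryGroup_iff.mp V.2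
  have h1 : z • (1 : Matrix (Fin n) (Fin n) ℂ) =
      (V : Matrix (Fin n) (Fin n) ℂ) * (z • 1) * star (V : Matrix (Fin n) (Fin n) ℂ) := by
    rw [Matrix.mul_smul, Matrix.mul_one, Matrix.smul_mul, hVV]
  rw [h1, ← Matrix.sub_mul, ← Matrix.mul_sub, det_mul, det_mul]
  rw [mul_comm ((V : Matrix (Fin n) (Fin n) ℂ)).det _, mul_assoc, ← det_mul, hVV, det_one, mul_one]
  have h2 : z • (1 : Matrix (Fin n) (Fin n) ℂ) - diagonal (RCLike.ofReal ∘ μ) =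
      diagonal (fun i => z - (μ i : ℂ)) := by
    ext i j
    by_cases h : i = j <;>
      simp [Matrix.sub_apply, Matrix.one_apply, Matrix.diagonal_apply, h]
  rw [h2, det_diagonal]

lemma det_smul_one_sub_eig {A : Matrix (Fin n) (Fin n) ℂ} (hA : A.IsHermitian) (z : ℂ) :
    det (z • (1 : Matrix (Fin n) (Fin n) ℂ) - A) = ∏ i, (z - (hA.eigenvalues i : ℂ)) := by
  conv_lhs => rw [hA.spectral_theorem]
  exact det_smul_one_sub_conj hA.eigenvectorUnitary hA.eigenvalues z

lemma kthLargestEig_of_isHermitian {A : Matrix (Fin n) (Fin n) ℂ} (hA : A.IsHermitian) (k : Fin n) :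
    kthLargestEig A k = (hA.eigenvalues ∘ Tuple.sort hA.eigenvalues) k.rev := dif_pos hA

lemma kthLargestEig_eq_of_det {M N : Matrix (Fin n) (Fin n) ℂ} (hM : M.IsHermitian)
    (hN : N.IsHermitian)
    (h : ∀ z : ℂ, z ≠ 0 → det (z • (1 : Matrix (Fin n) (Fin n) ℂ) - M) =
      det (z • (1 : Matrix (Fin n) (Fin n) ℂ) - N)) (k : Fin n) :
    kthLargestEig M k = kthLargestEig N k := by
  rw [kthLargestEig_of_isHermitian hM, kthLargestEig_of_isHermitian hN]
  refine congrFun (sorted_eq_of_multiset (multiset_eq_of_prod fun z hz => ?_)) k.rev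
  rw [← det_smul_one_sub_eig hM, ← det_smul_one_sub_eig hN]
  exact h z hz

lemma det_smul_one_sub_mul_comm (P Q : Matrix (Fin n) (Fin n) ℂ) {z : ℂ} (hz : z ≠ 0) :
    det (z • (1 : Matrix (Fin n) (Fin n) ℂ) - P * Q) =
    det (z • (1 : Matrix (Fin n) (Fin n) ℂ) - Q * P) := by
  have key : ∀ M : Matrix (Fin n) (Fin n) ℂ,
      z • (1 : Matrix (Fin n) (Fin n) ℂ) - M = z • (1 - z⁻¹ • M) := by
    intro M; rw [smul_sub, smul_smul, mul_inv_cancel₀ hz, one_smul]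
  rw [key, key, det_smul, det_smul]
  congr 1
  rw [show z⁻¹ • (P * Q) = (z⁻¹ • P) * Q from Matrix.smul_mul _ _ _ |>.symm,
    det_one_sub_mul_comm, Matrix.mul_smul]

lemma kthLargestEig_msqrt {M : Matrix (Fin n) (Fin n) ℂ} (hM : M.PosSemidef) (k : Fin n) :
    kthLargestEig (msqrt M) k = Real.sqrt (kthLargestEig M k) := by
  rw [show msqrt M = hM.sqrt from dif_pos hM]
  have hs : hM.sqrt.IsHermitian := hM.posSemidef_sqrt.1
  have hdet : ∀ z : ℂ, det (z • (1 : Matrix (Fin n) (Fin n) ℂ) - hM.sqrt) =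
      ∏ i, (z - (Real.sqrt (hM.1.eigenvalues i) : ℂ)) := by
    intro z
    have hd : hM.sqrt = (hM.1.eigenvectorUnitary : Matrix (Fin n) (Fin n) ℂ) *
        diagonal (RCLike.ofReal ∘ (Real.sqrt ∘ hM.1.eigenvalues)) *
        star (hM.1.eigenvectorUnitary : Matrix (Fin n) (Fin n) ℂ) := rfl
    rw [hd]
    exact det_smul_one_sub_conj _ _ z
  have h2 : hs.eigenvalues ∘ Tuple.sort hs.eigenvalues
      = (Real.sqrt ∘ hM.1.eigenvalues) ∘ Tuple.sort (Real.sqrt ∘ hM.1.eigenvalues) :=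
    sorted_eq_of_multiset (multiset_eq_of_prod fun z _ => by
      rw [← det_smul_one_sub_eig hs, hdet z]; rfl)
  have h3 : (Real.sqrt ∘ hM.1.eigenvalues) ∘ Tuple.sort (Real.sqrt ∘ hM.1.eigenvalues)
      = (Real.sqrt ∘ hM.1.eigenvalues) ∘ Tuple.sort hM.1.eigenvalues := by
    symm
    refine Tuple.comp_sort_eq_comp_iff_monotone.mpr ?_
    have : (Real.sqrt ∘ hM.1.eigenvalues) ∘ Tuple.sort hM.1.eigenvalues
        = Real.sqrt ∘ (hM.1.eigenvalues ∘ Tuple.sort hM.1.eigenvalues) := rfl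
    rw [this]
    exact Monotone.comp (fun _ _ h => Real.sqrt_le_sqrt h) (Tuple.monotone_sort _)
  rw [kthLargestEig_of_isHermitian hs, kthLargestEig_of_isHermitian hM.1, h2, h3]
  rfl

lemma repr_eq_zero_of_mem_span (b : OrthonormalBasis (Fin n) ℂ (EuclideanSpace ℂ (Fin n)))
    {S : Finset (Fin n)} {x : EuclideanSpace ℂ (Fin n)}
    (hx : x ∈ Submodule.span ℂ (⇑b '' ↑S)) {j : Fin n} (hj : j ∉ S) : b.repr x j = 0 := by
  induction hx using Submodule.span_induction with
  | mem y hy =>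
    obtain ⟨i, hi, rfl⟩ := hy
    rw [b.repr_self]
    simp only [EuclideanSpace.single_apply]
    rw [if_neg]
    rintro rfl; exact hj hi
  | zero => simp
  | add y z _ _ hy hz => simp [map_add, hy, hz]
  | smul c y _ hy => simp [_root_.map_smul, hy]

lemma finrank_span_onb (b : OrthonormalBasis (Fin n) ℂ (EuclideanSpace ℂ (Fin n)))
    (S : Finset (Fin n)) :
    Module.finrank ℂ (Submodule.span ℂ (⇑b '' ↑S)) = S.card := by
  have hli : LinearIndependent ℂ (fun i : {x // x ∈ S} => b i.val) :=
    b.orthonormal.linearIndependent.comp _ Subtype.val_injective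
  have h := finrank_span_eq_card hli
  have hv : Set.range (Subtype.val : {x // x ∈ S} → Fin n) = ↑S := Subtype.range_coe
  have hr : Set.range (fun i : {x // x ∈ S} => b i.val) = ⇑b '' ↑S := by
    rw [show (fun i : {x // x ∈ S} => b i.val) = ⇑b ∘ Subtype.val from rfl, Set.range_comp, hv]
  rw [hr] at h
  rw [h, Fintype.card_coe]

lemma inner_toEuclideanLin_eq_sum {A : Matrix (Fin n) (Fin n) ℂ} (hA : A.IsHermitian)
    (x : EuclideanSpace ℂ (Fin n)) :
    (inner ℂ x (Matrix.toEuclideanLin A x) : ℂ) =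
      ∑ i, (hA.eigenvalues i : ℂ) * ((‖hA.eigenvectorBasis.repr x i‖ : ℂ))^2 := by
  have hT : ∀ j, Matrix.toEuclideanLin A (hA.eigenvectorBasis j) = (hA.eigenvalues j : ℂ) • hA.eigenvectorBasis j := by
    intro j
    have h2 : A *ᵥ ⇑(hA.eigenvectorBasis j) = (hA.eigenvalues j : ℂ) • ⇑(hA.eigenvectorBasis j) := by
      rw [hA.mulVec_eigenvectorBasis j, RCLike.real_smul_eq_coe_smul (K := ℂ)]
      exact rfl
    have h4 : Matrix.toEuclideanLin A (hA.eigenvectorBasis j) =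
        (WithLp.equiv 2 (Fin n → ℂ)).symm (A *ᵥ ⇑(hA.eigenvectorBasis j)) := rfl
    rw [h4, h2]
    rfl
  have hTx : Matrix.toEuclideanLin A x = ∑ j, (hA.eigenvectorBasis.repr x j * (hA.eigenvalues j : ℂ)) • hA.eigenvectorBasis j := by
    conv_lhs => rw [← hA.eigenvectorBasis.sum_repr x]
    rw [map_sum]
    congr 1
    funext j
    rw [_root_.map_smul, hT j, smul_smul]
  rw [hTx, inner_sum]
  congr 1
  funext j
  have hx : (inner ℂ x (hA.eigenvectorBasis j) : ℂ) = starRingEnd ℂ (hA.eigenvectorBasis.repr x j) := by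
    rw [← inner_conj_symm, hA.eigenvectorBasis.repr_apply_apply]
  rw [inner_smul_right, hx]
  have h3 : (hA.eigenvectorBasis.repr x j * (hA.eigenvalues j : ℂ)) * starRingEnd ℂ (hA.eigenvectorBasis.repr x j)
      = (hA.eigenvalues j : ℂ) * (hA.eigenvectorBasis.repr x j * starRingEnd ℂ (hA.eigenvectorBasis.repr x j)) := by ring
  rw [h3, RCLike.mul_conj]
  exact rfl

lemma norm_sq_eq_sum_repr (b : OrthonormalBasis (Fin n) ℂ (EuclideanSpace ℂ (Fin n)))
    (x : EuclideanSpace ℂ (Fin n)) :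
    ∑ i, ‖b.repr x i‖ ^ 2 = ‖x‖ ^ 2 := by
  have h1 : ‖b.repr x‖ = ‖x‖ := b.repr.norm_map x
  rw [← h1, EuclideanSpace.norm_eq, Real.sq_sqrt]
  positivity

lemma re_inner_toEuclideanLin_eq {A : Matrix (Fin n) (Fin n) ℂ} (hA : A.IsHermitian)
    (x : EuclideanSpace ℂ (Fin n)) :
    RCLike.re (inner ℂ x (Matrix.toEuclideanLin A x) : ℂ) =
      ∑ i, hA.eigenvalues i * ‖hA.eigenvectorBasis.repr x i‖ ^ 2 := by
  rw [inner_toEuclideanLin_eq_sum hA, map_sum]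
  congr 1
  funext i
  have : ((hA.eigenvalues i : ℂ)) * ((‖hA.eigenvectorBasis.repr x i‖ : ℂ)) ^ 2
      = ((hA.eigenvalues i * ‖hA.eigenvectorBasis.repr x i‖ ^ 2 : ℝ) : ℂ) := by
    push_cast
    ring
  rw [this]
  exact Complex.ofReal_re _

lemma re_inner_mono {A B : Matrix (Fin n) (Fin n) ℂ} (hAB : (B - A).PosSemidef)
    (x : EuclideanSpace ℂ (Fin n)) :
    RCLike.re (inner ℂ x (Matrix.toEuclideanLin A x) : ℂ) ≤
      RCLike.re (inner ℂ x (Matrix.toEuclideanLin B x) : ℂ) := by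
  have h := hAB.re_dotProduct_nonneg (WithLp.equiv 2 (Fin n → ℂ) x)
  have he : (inner ℂ x (Matrix.toEuclideanLin (B - A) x) : ℂ)
      = dotProduct (star (WithLp.equiv 2 (Fin n → ℂ) x))
        ((B - A) *ᵥ (WithLp.equiv 2 (Fin n → ℂ) x)) := by
    rw [EuclideanSpace.inner_eq_star_dotProduct, dotProduct_comm]
    rfl
  have hsub : Matrix.toEuclideanLin (B - A) x
      = Matrix.toEuclideanLin B x - Matrix.toEuclideanLin A x := by
    rw [map_sub]
    rfl
  rw [hsub, inner_sub_right] at he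
  have h' : (0:ℝ) ≤ RCLike.re ((inner ℂ x (Matrix.toEuclideanLin B x) : ℂ)
      - (inner ℂ x (Matrix.toEuclideanLin A x) : ℂ)) := he ▸ h
  rw [map_sub] at h'
  linarith

lemma weyl_mono {A B : Matrix (Fin n) (Fin n) ℂ} (hA : A.IsHermitian) (hB : B.IsHermitian)
    (hAB : (B - A).PosSemidef) (k : Fin n) : kthLargestEig A k ≤ kthLargestEig B k := by
  rw [kthLargestEig_of_isHermitian hA, kthLargestEig_of_isHermitian hB]
  set σA := Tuple.sort hA.eigenvalues with hσA
  set σB := Tuple.sort hB.eigenvalues with hσB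
  set SA := (Finset.Ici k.rev).image σA with hSA
  set SB := (Finset.Iic k.rev).image σB with hSB
  have hk := k.isLt
  have hcardA : SA.card = k.val + 1 := by
    rw [hSA, Finset.card_image_of_injective _ σA.injective, Fin.card_Ici, Fin.val_rev]
    omega
  have hcardB : SB.card = n - k.val := by
    rw [hSB, Finset.card_image_of_injective _ σB.injective, Fin.card_Iic, Fin.val_rev]
    omega
  set V := Submodule.span ℂ (⇑hA.eigenvectorBasis '' ↑SA) with hV
  set W := Submodule.span ℂ (⇑hB.eigenvectorBasis '' ↑SB) with hW
  have hdim : 0 < Module.finrank ℂ ↥(V ⊓ W) := by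
    have h1 := Submodule.finrank_sup_add_finrank_inf_eq V W
    have h2 : Module.finrank ℂ ↥(V ⊔ W) ≤ n := by
      have h3 := Submodule.finrank_le (V ⊔ W)
      rwa [finrank_euclideanSpace_fin] at h3
    have hfV : Module.finrank ℂ ↥V = SA.card := by rw [hV]; exact finrank_span_onb _ _
    have hfW : Module.finrank ℂ ↥W = SB.card := by rw [hW]; exact finrank_span_onb _ _
    rw [hfV, hfW, hcardA, hcardB] at h1
    omega
  obtain ⟨x, hxV, hxW, hx0⟩ : ∃ x, x ∈ V ∧ x ∈ W ∧ x ≠ 0 := by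
    haveI : Nontrivial ↥(V ⊓ W) := Module.finrank_pos_iff.mp hdim
    obtain ⟨y, hy⟩ := exists_ne (0 : ↥(V ⊓ W))
    exact ⟨y.val, (Submodule.mem_inf.mp y.2).1, (Submodule.mem_inf.mp y.2).2,
      by simpa using hy⟩
  have hnorm : (0 : ℝ) < ‖x‖ ^ 2 := by
    have := norm_pos_iff.mpr hx0
    positivity
  have hlow : (hA.eigenvalues ∘ σA) k.rev * ‖x‖ ^ 2 ≤
      RCLike.re (inner ℂ x (Matrix.toEuclideanLin A x) : ℂ) := by
    rw [re_inner_toEuclideanLin_eq hA, ← norm_sq_eq_sum_repr hA.eigenvectorBasis x,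
      Finset.mul_sum]
    apply Finset.sum_le_sum
    intro i _
    by_cases hi : i ∈ SA
    · rw [hSA] at hi
      obtain ⟨j, hj, rfl⟩ := Finset.mem_image.mp hi
      have hmon : (hA.eigenvalues ∘ σA) k.rev ≤ hA.eigenvalues (σA j) :=
        Tuple.monotone_sort hA.eigenvalues (Finset.mem_Ici.mp hj)
      exact mul_le_mul_of_nonneg_right hmon (sq_nonneg _)
    · rw [repr_eq_zero_of_mem_span hA.eigenvectorBasis hxV hi]
      simp
  have hhigh : RCLike.re (inner ℂ x (Matrix.toEuclideanLin B x) : ℂ) ≤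
      (hB.eigenvalues ∘ σB) k.rev * ‖x‖ ^ 2 := by
    rw [re_inner_toEuclideanLin_eq hB, ← norm_sq_eq_sum_repr hB.eigenvectorBasis x,
      Finset.mul_sum]
    apply Finset.sum_le_sum
    intro i _
    by_cases hi : i ∈ SB
    · rw [hSB] at hi
      obtain ⟨j, hj, rfl⟩ := Finset.mem_image.mp hi
      have hmon : hB.eigenvalues (σB j) ≤ (hB.eigenvalues ∘ σB) k.rev :=
        Tuple.monotone_sort hB.eigenvalues (Finset.mem_Iic.mp hj)
      exact mul_le_mul_of_nonneg_right hmon (sq_nonneg _)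
    · rw [repr_eq_zero_of_mem_span hB.eigenvectorBasis hxW hi]
      simp
  have hmid := re_inner_mono hAB x
  have hfin : (hA.eigenvalues ∘ σA) k.rev * ‖x‖ ^ 2 ≤ (hB.eigenvalues ∘ σB) k.rev * ‖x‖ ^ 2 := by
    linarith
  exact le_of_mul_le_mul_right hfin hnorm

end WeylHelpers

/-- Weyl's monotonicity theorem and its consequence for partial fidelities
`F_m^+`: sums of the `m` largest eigenvalues of `(A^{1/2} C A^{1/2})^{1/2}`. -/
theorem weyl_monotonicity_and_partial_fidelity {n : ℕ} (A B : Matrix (Fin n) (Fin n) ℂ)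
    (hA : A.PosSemidef) (hB : B.PosSemidef) (hAB : (B - A).PosSemidef) :
    (∀ k : Fin n, kthLargestEig A k ≤ kthLargestEig B k) ∧
    (∀ C : Matrix (Fin n) (Fin n) ℂ, C.PosSemidef → ∀ m : ℕ,
      ∑ k ∈ Finset.univ.filter (fun k : Fin n => (k : ℕ) < m),
          kthLargestEig (msqrt (msqrt A * C * msqrt A)) k ≤
      ∑ k ∈ Finset.univ.filter (fun k : Fin n => (k : ℕ) < m),
          kthLargestEig (msqrt (msqrt B * C * msqrt B)) k) := by
  constructor
  · exact fun k => weyl_mono hA.1 hB.1 hAB k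
  · intro C hC m
    apply Finset.sum_le_sum
    intro k _
    have hsA : msqrt A = hA.sqrt := dif_pos hA
    have hsB : msqrt B = hB.sqrt := dif_pos hB
    have hsC : msqrt C = hC.sqrt := dif_pos hC
    have hermA : (hA.sqrt).conjTranspose = hA.sqrt := hA.posSemidef_sqrt.1
    have hermB : (hB.sqrt).conjTranspose = hB.sqrt := hB.posSemidef_sqrt.1
    have hermC : (hC.sqrt).conjTranspose = hC.sqrt := hC.posSemidef_sqrt.1
    have hMA : (msqrt A * C * msqrt A).PosSemidef := by
      rw [hsA]
      have := hC.mul_mul_conjTranspose_same hA.sqrt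
      rwa [hermA] at this
    have hMB : (msqrt B * C * msqrt B).PosSemidef := by
      rw [hsB]
      have := hC.mul_mul_conjTranspose_same hB.sqrt
      rwa [hermB] at this
    have hNA : (msqrt C * A * msqrt C).PosSemidef := by
      rw [hsC]
      have := hA.mul_mul_conjTranspose_same hC.sqrt
      rwa [hermC] at this
    have hNB : (msqrt C * B * msqrt C).PosSemidef := by
      rw [hsC]
      have := hB.mul_mul_conjTranspose_same hC.sqrt
      rwa [hermC] at this
    have hdetA : ∀ z : ℂ, z ≠ 0 →
        Matrix.det (z • (1 : Matrix (Fin n) (Fin n) ℂ) - msqrt A * C * msqrt A) =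
        Matrix.det (z • (1 : Matrix (Fin n) (Fin n) ℂ) - msqrt C * A * msqrt C) := by
      intro z hz
      have hPQ : (msqrt A * msqrt C) * (msqrt C * msqrt A) = msqrt A * C * msqrt A := by
        rw [hsA, hsC, Matrix.mul_assoc, ← Matrix.mul_assoc hC.sqrt, hC.sqrt_mul_self,
          ← Matrix.mul_assoc]
      have hQP : (msqrt C * msqrt A) * (msqrt A * msqrt C) = msqrt C * A * msqrt C := by
        rw [hsA, hsC, Matrix.mul_assoc, ← Matrix.mul_assoc hA.sqrt, hA.sqrt_mul_self,
          ← Matrix.mul_assoc]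
      rw [← hPQ, ← hQP]
      exact det_smul_one_sub_mul_comm _ _ hz
    have hdetB : ∀ z : ℂ, z ≠ 0 →
        Matrix.det (z • (1 : Matrix (Fin n) (Fin n) ℂ) - msqrt B * C * msqrt B) =
        Matrix.det (z • (1 : Matrix (Fin n) (Fin n) ℂ) - msqrt C * B * msqrt C) := by
      intro z hz
      have hPQ : (msqrt B * msqrt C) * (msqrt C * msqrt B) = msqrt B * C * msqrt B := by
        rw [hsB, hsC, Matrix.mul_assoc, ← Matrix.mul_assoc hC.sqrt, hC.sqrt_mul_self,
          ← Matrix.mul_assoc]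
      have hQP : (msqrt C * msqrt B) * (msqrt B * msqrt C) = msqrt C * B * msqrt C := by
        rw [hsB, hsC, Matrix.mul_assoc, ← Matrix.mul_assoc hB.sqrt, hB.sqrt_mul_self,
          ← Matrix.mul_assoc]
      rw [← hPQ, ← hQP]
      exact det_smul_one_sub_mul_comm _ _ hz
    have h1A := kthLargestEig_eq_of_det hMA.1 hNA.1 hdetA k
    have h1B := kthLargestEig_eq_of_det hMB.1 hNB.1 hdetB k
    have hsubNN : (msqrt C * B * msqrt C - msqrt C * A * msqrt C).PosSemidef := by
      have heq : msqrt C * B * msqrt C - msqrt C * A * msqrt C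
          = (hC.sqrt).conjTranspose * (B - A) * hC.sqrt := by
        rw [hermC, hsC, Matrix.mul_sub, Matrix.sub_mul]
      rw [heq]
      exact hAB.conjTranspose_mul_mul_same hC.sqrt
    have hmono : kthLargestEig (msqrt C * A * msqrt C) k ≤
        kthLargestEig (msqrt C * B * msqrt C) k :=
      weyl_mono hNA.1 hNB.1 hsubNN k
    rw [kthLargestEig_msqrt hMA k, kthLargestEig_msqrt hMB k, h1A, h1B]
    exact Real.sqrt_le_sqrt (by linarith)
end
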